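/- Suppose for a shift-invariant probability measure P on Ω = A^ℕ there exists a constant C > 0 such that for any two Borel-measurable cylinder sets C₁, C₂ there exists t ∈ ℕ₀ with P(C₁ ∩ φ⁻ᵗ C₂) ≥ C · P(C₁) · P(C₂). Then P is ergodic. -/

import Mathlib

/-!
If `B` is invariant mod `0`, approximate it by a cylinder `S` with `P (B ∆ S) < δ`. Invariance
of `B` forces `P (S ∩ φ⁻ᵗ Sᶜ) ≤ P (B ∆ S)` for every `t`, while the correlation bound applied to
`S` and `Sᶜ` gives `P (S ∩ φ⁻ᵗ Sᶜ) ≥ C P(S) P(Sᶜ) ≈ C P(B) P(Bᶜ)`. Letting `δ → 0` shows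
`P(B) P(Bᶜ) = 0`.
-/

open MeasureTheory

/-- The left shift on the one-sided shift space `A^ℕ`. -/
def shiftMap {A : Type*} (ω : ℕ → A) : ℕ → A := fun n => ω (n + 1)

/-- A cylinder set: a set determined by finitely many coordinates. -/
def IsCylinderSet {A : Type*} (S : Set (ℕ → A)) : Prop :=
  ∃ (r : ℕ) (W : Set (Fin r → A)), S = {ω | (fun i : Fin r => ω i) ∈ W}

open scoped symmDiff

namespace MeasureTheory

section Correlation

variable {α : Type*} [MeasurableSpace α] {μ : Measure α} {f : α → α} {B S : Set α}

theorem measure_inter_preimage_iterate_compl_le_measure_symmDiff (hf : MeasurePreserving f μ μ)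
    (hB : MeasurableSet B) (hBinv : f ⁻¹' B =ᵐ[μ] B) (hS : MeasurableSet S) (t : ℕ) :
    μ (S ∩ f^[t] ⁻¹' Sᶜ) ≤ μ (B ∆ S) := by
  have hBt : B =ᵐ[μ] f^[t] ⁻¹' B :=
    (hf.quasiMeasurePreserving.preimage_iterate_ae_eq t hBinv).symm
  calc μ (S ∩ f^[t] ⁻¹' Sᶜ)
      ≤ μ (S \ B ∪ B ∩ f^[t] ⁻¹' Sᶜ) := by
        refine measure_mono fun x ⟨hxS, hxt⟩ => ?_
        by_cases hxB : x ∈ B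
        exacts [Or.inr ⟨hxB, hxt⟩, Or.inl ⟨hxS, hxB⟩]
    _ ≤ μ (S \ B) + μ (B ∩ f^[t] ⁻¹' Sᶜ) := measure_union_le _ _
    _ = μ (S \ B) + μ (B \ S) := by
        rw [measure_congr (hBt.inter (ae_eq_refl (f^[t] ⁻¹' Sᶜ))), ← Set.preimage_inter,
          (hf.iterate t).measure_preimage (hB.inter hS.compl).nullMeasurableSet, ← Set.sdiff_eq]
    _ = μ (B ∆ S) := by
        rw [symmDiff_comm, measure_symmDiff_eq hS.nullMeasurableSet hB.nullMeasurableSet]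

variable [IsProbabilityMeasure μ]

/-- `x ↦ x (1 - x)` is `1`-Lipschitz on `[0, 1]`. -/
theorem measureReal_mul_measureReal_compl_le (hB : MeasurableSet B) (hS : MeasurableSet S) :
    μ.real B * μ.real Bᶜ ≤ μ.real S * μ.real Sᶜ + μ.real (B ∆ S) := by
  rw [probReal_compl_eq_one_sub hB, probReal_compl_eq_one_sub hS]
  have hdist := abs_le.mp
    (abs_measureReal_sub_le_measureReal_symmDiff (μ := μ) hB.nullMeasurableSet hS.nullMeasurableSet)
  have hB1 : μ.real B ≤ 1 := measureReal_le_one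
  have hS1 : μ.real S ≤ 1 := measureReal_le_one
  have hB0 : 0 ≤ μ.real B := measureReal_nonneg
  have hS0 : 0 ≤ μ.real S := measureReal_nonneg
  nlinarith

theorem measure_eq_zero_or_one_of_correlation_compl {𝒜 : Set (Set α)} (h𝒜 : μ.MeasureDense 𝒜)
    (hf : MeasurePreserving f μ μ) {C : ℝ} (hC : 0 < C)
    (hcorr : ∀ S ∈ 𝒜, ∃ t : ℕ, C * μ.real S * μ.real Sᶜ ≤ μ.real (S ∩ f^[t] ⁻¹' Sᶜ))
    (hB : MeasurableSet B) (hBinv : f ⁻¹' B =ᵐ[μ] B) : μ B = 0 ∨ μ B = 1 := by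
  by_contra! hB01
  have hvar : 0 < μ.real B * μ.real Bᶜ := mul_pos
    (ENNReal.toReal_pos hB01.1 (measure_ne_top μ B))
    (ENNReal.toReal_pos (mt (prob_compl_eq_zero_iff hB).1 hB01.2) (measure_ne_top μ _))
  obtain ⟨S, hS𝒜, hBS⟩ := h𝒜.approx B hB (measure_ne_top μ B)
    (C * (μ.real B * μ.real Bᶜ) / (C + 1)) (by positivity)
  have hS := h𝒜.measurable S hS𝒜
  obtain ⟨t, ht⟩ := hcorr S hS𝒜
  have hsmall : μ.real (B ∆ S) * (C + 1) < C * (μ.real B * μ.real Bᶜ) :=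
    (lt_div_iff₀ (by positivity)).mp (ENNReal.toReal_lt_of_lt_ofReal hBS)
  have hupper : μ.real (S ∩ f^[t] ⁻¹' Sᶜ) ≤ μ.real (B ∆ S) :=
    ENNReal.toReal_mono (measure_ne_top μ _)
      (measure_inter_preimage_iterate_compl_le_measure_symmDiff hf hB hBinv hS t)
  have hclose := measureReal_mul_measureReal_compl_le (μ := μ) hB hS
  nlinarith

end Correlation

theorem Measure.measureDense_measurableCylinders {ι : Type*} {X : ι → Type*}
    [∀ i, MeasurableSpace (X i)] (μ : Measure (∀ i, X i)) [IsFiniteMeasure μ] :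
    μ.MeasureDense (measurableCylinders X) :=
  .of_generateFrom_isSetAlgebra_finite μ isSetAlgebra_measurableCylinders
    generateFrom_measurableCylinders.symm

end MeasureTheory

section Shift

variable {A : Type*}

lemma measurable_shiftMap [MeasurableSpace A] : Measurable (shiftMap (A := A)) :=
  measurable_pi_lambda _ fun n => measurable_pi_apply (n + 1)

lemma measurePreserving_shiftMap [MeasurableSpace A] {P : Measure (ℕ → A)}
    (hinv : ∀ S, MeasurableSet S → P (shiftMap ⁻¹' S) = P S) : MeasurePreserving shiftMap P P :=
  ⟨measurable_shiftMap, Measure.ext fun S hS => by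
    rw [Measure.map_apply measurable_shiftMap hS, hinv S hS]⟩

lemma isCylinderSet_of_mem_measurableCylinders [MeasurableSpace A] {S : Set (ℕ → A)}
    (hS : S ∈ measurableCylinders fun _ : ℕ => A) : IsCylinderSet S := by
  obtain ⟨s, T, -, rfl⟩ := (mem_measurableCylinders S).1 hS
  refine ⟨s.sup id + 1, {f : Fin (s.sup id + 1) → A |
    (fun i : s => f ⟨i.1, Nat.lt_succ_of_le (Finset.le_sup (f := id) i.2)⟩) ∈ T}, ?_⟩
  ext ω
  rfl

lemma IsCylinderSet.compl {S : Set (ℕ → A)} (hS : IsCylinderSet S) : IsCylinderSet Sᶜ := by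
  obtain ⟨r, W, rfl⟩ := hS
  exact ⟨r, Wᶜ, rfl⟩

end Shift

theorem stmt_8_general {A : Type*} [MeasurableSpace A]
    (P : Measure (ℕ → A)) [IsProbabilityMeasure P]
    (hinv : ∀ S : Set (ℕ → A), MeasurableSet S → P (shiftMap ⁻¹' S) = P S)
    (C : ℝ) (hC : 0 < C)
    (hcorr : ∀ S₁ S₂ : Set (ℕ → A), IsCylinderSet S₁ → IsCylinderSet S₂ →
      ∃ t : ℕ, C * (P S₁).toReal * (P S₂).toReal ≤ (P (S₁ ∩ (shiftMap^[t]) ⁻¹' S₂)).toReal) :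
    ∀ B : Set (ℕ → A), MeasurableSet B → P (symmDiff B (shiftMap ⁻¹' B)) = 0 →
      P B = 0 ∨ P B = 1 := by
  intro B hB hBinv
  refine measure_eq_zero_or_one_of_correlation_compl (Measure.measureDense_measurableCylinders P)
    (measurePreserving_shiftMap hinv) hC (fun S hS => ?_) hB
    (measure_symmDiff_eq_zero_iff.mp hBinv).symm
  have hScyl := isCylinderSet_of_mem_measurableCylinders hS
  exact hcorr S Sᶜ hScyl hScyl.compl

theorem stmt_8 {A : Type*} [Fintype A] [MeasurableSpace A] [MeasurableSingletonClass A]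
    (P : Measure (ℕ → A)) [IsProbabilityMeasure P]
    (hinv : ∀ S : Set (ℕ → A), MeasurableSet S → P (shiftMap ⁻¹' S) = P S)
    (C : ℝ) (hC : 0 < C)
    (hcorr : ∀ S₁ S₂ : Set (ℕ → A), IsCylinderSet S₁ → IsCylinderSet S₂ →
      ∃ t : ℕ, C * (P S₁).toReal * (P S₂).toReal ≤ (P (S₁ ∩ (shiftMap^[t]) ⁻¹' S₂)).toReal) :
    ∀ B : Set (ℕ → A), MeasurableSet B → P (symmDiff B (shiftMap ⁻¹' B)) = 0 →
      P B = 0 ∨ P B = 1 :=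
  stmt_8_general P hinv C hC hcorr
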